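/- arXiv:1010.1455 — 2 statements merged into one kernel-verified Lean document; each statement's English description precedes it below -/
import Mathlib

section
/- Let G be a finite simple graph in which every edge has weight 1, and suppose G contains two mutually adjacent vertices v_1, v_2 (adjacent vertices with the same set of other neighbors), with the indicator piece starting at v_1. Then in Nim on graphs the first player has a winning strategy. -/
/-!
The first player deletes the edge `v₁v₂` outright. The piece then sits on `v₂`, and `v₁`, `v₂`
are non-adjacent twins: every other vertex is joined to both with the same weight. From such a
position the mover loses: a move `v₂ → x` lowering the weight of `v₂x` to `k` is answered by
`x → v₁`, lowering `xv₁` to `k`, which restores a twin position with the roles of `v₁` and `v₂`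
exchanged. Every move lowers the total weight, so this mirror strategy wins.
-/

/-- A position of Nim on graphs: a symmetric non-negative integer weight
function on pairs of vertices (the weighted graph; weight-zero pairs are
non-edges) plus the location of the indicator piece. -/
structure NimPos (V : Type) where
  w : V → V → ℕ
  symm : ∀ u v, w u v = w v u
  pos : V

/-- A legal move: decrease the weight of an edge incident with the piece to a
strictly smaller value and move the piece along it; all other weights stay. -/
def NimMove {V : Type} (p q : NimPos V) : Prop :=
  p.pos ≠ q.pos ∧
  q.w p.pos q.pos < p.w p.pos q.pos ∧
  ∀ u v, ¬((u = p.pos ∧ v = q.pos) ∨ (u = q.pos ∧ v = p.pos)) → q.w u v = p.w u v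

/-- The player to move loses (the position is a 0-position): the opponent has
a winning strategy `f` answering every move. -/
inductive MoverLoses {V : Type} : NimPos V → Prop
  | intro (p : NimPos V) (f : ∀ q, NimMove p q → NimPos V)
      (hmove : ∀ q (h : NimMove p q), NimMove q (f q h))
      (hwin : ∀ q (h : NimMove p q), MoverLoses (f q h)) : MoverLoses p

/-- The player to move wins (the position is a p-position). -/
def MoverWins {V : Type} (p : NimPos V) : Prop :=
  ∃ q, NimMove p q ∧ MoverLoses q

/-- Weights of the path on vertices `0,…,n` of `Fin (n+1)`: edge `i — i+1` has weight `ω i`. -/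
def pathW (n : ℕ) (ω : ℕ → ℕ) (u v : Fin (n+1)) : ℕ :=
  if u.val + 1 = v.val then ω u.val
  else if v.val + 1 = u.val then ω v.val else 0

theorem pathW_symm (n : ℕ) (ω : ℕ → ℕ) : ∀ u v, pathW n ω u v = pathW n ω v u := by
  intro u v; unfold pathW; split_ifs <;> first | rfl | (exfalso; omega)

/-- Weights of the cycle on `Fin m` (`m ≥ 3`): edge `i — (i+1) % m` has weight `ω i`. -/
def cycW (m : ℕ) (ω : ℕ → ℕ) (u v : Fin m) : ℕ :=
  (if (u.val + 1) % m = v.val then ω u.val else 0) +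
  (if (v.val + 1) % m = u.val then ω v.val else 0)

theorem cycW_symm (m : ℕ) (ω : ℕ → ℕ) : ∀ u v, cycW m ω u v = cycW m ω v u :=
  fun _ _ => Nat.add_comm _ _

/-- Weight-1 complete bipartite graph `K_{2,j}`: part `{0,1}` and part `{2,…,j+1}`. -/
def k2W (j : ℕ) (u v : Fin (j+2)) : ℕ :=
  if (u.val < 2 ∧ 2 ≤ v.val) ∨ (v.val < 2 ∧ 2 ≤ u.val) then 1 else 0

theorem k2W_symm (j : ℕ) : ∀ u v, k2W j u v = k2W j v u := by
  intro u v; unfold k2W; split_ifs <;> omega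

/-- Weight-1 `SSB_j = K_{2,j} + e_{12}`: `K_{2,j}` plus the edge `0 — 1`. -/
def ssbW (j : ℕ) (u v : Fin (j+2)) : ℕ :=
  if ((u.val < 2 ∧ 2 ≤ v.val) ∨ (v.val < 2 ∧ 2 ≤ u.val)) ∨
      (u.val < 2 ∧ v.val < 2 ∧ u.val ≠ v.val) then 1 else 0

theorem ssbW_symm (j : ℕ) : ∀ u v, ssbW j u v = ssbW j v u := by
  intro u v; unfold ssbW; split_ifs <;> omega

/-- Weight-1 complete graph `K_n`. -/
def knW (n : ℕ) (u v : Fin n) : ℕ := if u.val ≠ v.val then 1 else 0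

theorem knW_symm (n : ℕ) : ∀ u v, knW n u v = knW n v u := by
  intro u v; unfold knW; split_ifs <;> omega

/-- Length of the maximal all-positive run of cycle edges clockwise from vertex `s`. -/
noncomputable def fwdLen (m : ℕ) (w : ℕ → ℕ) (s : ℕ) : ℕ :=
  sSup {d | d ≤ m ∧ ∀ i < d, 0 < w ((s + i) % m)}

/-- Length of the maximal all-positive run of cycle edges counterclockwise from vertex `s`. -/
noncomputable def bwdLen (m : ℕ) (w : ℕ → ℕ) (s : ℕ) : ℕ :=
  sSup {d | d ≤ m ∧ ∀ i < d, 0 < w ((s + m - 1 - i) % m)}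

namespace NimPos

variable {V : Type}

def totalWeight [Fintype V] (p : NimPos V) : ℕ := ∑ z : V × V, p.w z.1 z.2

def moveTo [DecidableEq V] (p : NimPos V) (x : V) (k : ℕ) : NimPos V where
  w u v := if s(u, v) = s(p.pos, x) then k else p.w u v
  symm u v := by rw [Sym2.eq_swap, p.symm]
  pos := x

def Twins (p : NimPos V) (a b : V) : Prop :=
  a ≠ b ∧ p.w a b = 0 ∧ ∀ x, x ≠ a → x ≠ b → p.w a x = p.w b x

section moveTo

variable [DecidableEq V] (p : NimPos V) (x : V) (k : ℕ)

lemma moveTo_w_of_ne {u v : V} (h : s(u, v) ≠ s(p.pos, x)) : (p.moveTo x k).w u v = p.w u v :=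
  if_neg h

lemma moveTo_w_self : (p.moveTo x k).w p.pos x = k := if_pos rfl

lemma nimMove_moveTo (hx : p.pos ≠ x) (hk : k < p.w p.pos x) : NimMove p (p.moveTo x k) := by
  refine ⟨hx, (moveTo_w_self p x k).symm ▸ hk, fun u v huv => moveTo_w_of_ne p x k ?_⟩
  rwa [Ne, Sym2.eq_iff]

end moveTo

end NimPos

open NimPos

section

variable {V : Type}

lemma NimMove.w_le {p q : NimPos V} (h : NimMove p q) (u v : V) : q.w u v ≤ p.w u v := by
  obtain ⟨-, hlt, hrest⟩ := h
  by_cases huv : (u = p.pos ∧ v = q.pos) ∨ (u = q.pos ∧ v = p.pos)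
  · rcases huv with ⟨rfl, rfl⟩ | ⟨rfl, rfl⟩
    · exact hlt.le
    · rw [q.symm, p.symm]; exact hlt.le
  · exact (hrest u v huv).le

lemma NimMove.totalWeight_lt [Fintype V] {p q : NimPos V} (h : NimMove p q) :
    q.totalWeight < p.totalWeight :=
  Finset.sum_lt_sum (fun z _ => h.w_le z.1 z.2) ⟨(p.pos, q.pos), Finset.mem_univ _, h.2.1⟩

lemma MoverLoses.of_forall_exists {p : NimPos V}
    (h : ∀ q, NimMove p q → ∃ r, NimMove q r ∧ MoverLoses r) : MoverLoses p :=
  .intro p (fun q hq => (h q hq).choose) (fun q hq => (h q hq).choose_spec.1)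
    (fun q hq => (h q hq).choose_spec.2)

lemma NimPos.Twins.mirror [DecidableEq V] {p q : NimPos V} {b : V}
    (ht : p.Twins p.pos b) (hq : NimMove p q) :
    NimMove q (q.moveTo b (q.w p.pos q.pos)) ∧ (q.moveTo b (q.w p.pos q.pos)).Twins b p.pos := by
  obtain ⟨hab, hzero, htwin⟩ := ht
  obtain ⟨hax, hlt, hrest⟩ := hq
  set a := p.pos
  set x := q.pos
  have hbx : b ≠ x := by
    rintro rfl
    simp [hzero] at hlt
  have hq_bx : q.w x b = p.w a x := by
    rw [q.symm, hrest b x (by tauto), htwin x (Ne.symm hax) (Ne.symm hbx)]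
  refine ⟨nimMove_moveTo q b _ (Ne.symm hbx) (by rwa [hq_bx]), hab.symm, ?_, fun y hyb hya => ?_⟩
  · rw [moveTo_w_of_ne _ _ _ (by rw [Ne, Sym2.eq_iff]; tauto), hrest b a (by tauto), p.symm,
      hzero]
  · by_cases hyx : y = x
    · rw [hyx, q.moveTo_w_of_ne b _ (u := a) (v := x) (by rw [Ne, Sym2.eq_iff]; tauto)]
      exact if_pos Sym2.eq_swap
    · rw [q.moveTo_w_of_ne _ _ (by rw [Ne, Sym2.eq_iff]; tauto),
        q.moveTo_w_of_ne _ _ (by rw [Ne, Sym2.eq_iff]; tauto), hrest b y (by tauto),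
        hrest a y (by tauto), htwin y hya hyb]

theorem MoverLoses.of_twins [Fintype V] (p : NimPos V) (b : V)
    (ht : p.Twins p.pos b) : MoverLoses p := by
  classical
  induction hn : p.totalWeight using Nat.strong_induction_on generalizing p b with
  | _ n ih =>
  refine .of_forall_exists fun q hq => ⟨_, (ht.mirror hq).1, ?_⟩
  have hlt := (ht.mirror hq).1.totalWeight_lt.trans hq.totalWeight_lt
  exact ih _ (hn ▸ hlt) _ _ (ht.mirror hq).2 rfl

theorem MoverWins.of_adjacent_twin [Fintype V] (p : NimPos V) (b : V)
    (hne : p.pos ≠ b) (hpos : 0 < p.w p.pos b)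
    (htwin : ∀ x, x ≠ p.pos → x ≠ b → p.w p.pos x = p.w b x) : MoverWins p := by
  classical
  refine ⟨p.moveTo b 0, nimMove_moveTo p b 0 hne hpos, MoverLoses.of_twins _ p.pos
    ⟨hne.symm, if_pos Sym2.eq_swap, fun y hyb hya => ?_⟩⟩
  rw [moveTo_w_of_ne _ _ _ (by rw [Ne, Sym2.eq_iff]; tauto),
    moveTo_w_of_ne _ _ _ (by rw [Ne, Sym2.eq_iff]; tauto)]
  exact (htwin y hya hyb).symm

end

/-- Nim with all edge weights 1 on a finite simple graph
containing two mutually adjacent vertices `v₁, v₂` (adjacent, and every other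
vertex is adjacent to both or neither), piece starting at `v₁`: the first
player wins. -/
theorem stmt10 {V : Type} [Fintype V] (G : SimpleGraph V) [DecidableRel G.Adj]
    (v1 v2 : V) (hadj : G.Adj v1 v2)
    (hmut : ∀ w, w ≠ v1 → w ≠ v2 → (G.Adj v1 w ↔ G.Adj v2 w)) :
    MoverWins ⟨fun a b => if G.Adj a b then 1 else 0,
      fun a b => if_congr (G.adj_comm a b) rfl rfl, v1⟩ :=
  MoverWins.of_adjacent_twin _ v2 hadj.ne (by simp [hadj])
    fun x hx1 hx2 => if_congr (hmut x hx1 hx2) rfl rfl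
end

section
/- In Nim on graphs, if the indicator piece is at a vertex v of a tree such that every path from v to a leaf has even length, and all edges have weight 1, then the player to move loses under optimal play. -/
/-!
Along a tree with all weights `1`, the edges played so far always form a path from the start
vertex `v` to the piece. If the mover extends a path of even length, the new endpoint lies at odd
distance from `v`, so by hypothesis it is not a leaf and the opponent can extend the path by a
fresh edge, restoring even length. Paths in a finite graph are bounded in length, so the mover
is eventually stuck.
-/

open SimpleGraph Walk

@[ext]
theorem NimPos.ext {V : Type} {p q : NimPos V} (hw : ∀ a b, p.w a b = q.w a b)
    (hpos : p.pos = q.pos) : p = q := by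
  cases p; cases q
  simp only [NimPos.mk.injEq] at hpos ⊢
  exact ⟨funext fun a => funext (hw a), hpos⟩

lemma MoverLoses.of_forall_moverWins {V : Type} {p : NimPos V}
    (h : ∀ q, NimMove p q → MoverWins q) : MoverLoses p := by
  choose f hmove hwin using h
  exact MoverLoses.intro p f hmove hwin

namespace SimpleGraph

variable {V : Type} {G : SimpleGraph V}

theorem Walk.IsTrail.concat {u v w : V} {p : G.Walk u v} (hp : p.IsTrail) (h : G.Adj v w)
    (he : s(v, w) ∉ p.edges) : (p.concat h).IsTrail := by
  rw [isTrail_def, edges_concat, List.concat_eq_append, List.nodup_append]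
  exact ⟨hp.edges_nodup, List.nodup_singleton _, fun e he' _ hx hex => he (by simp_all)⟩

theorem Walk.IsPath.exists_adj_notMem_edges [Fintype V] [DecidableRel G.Adj] {u v : V}
    {p : G.Walk u v} (hp : p.IsPath) (hdeg : 1 < G.degree v) :
    ∃ w, G.Adj v w ∧ s(v, w) ∉ p.edges := by
  classical
  obtain ⟨w, hw, hne⟩ := Finset.exists_mem_ne hdeg p.penultimate
  exact ⟨w, (G.mem_neighborFinset v w).mp hw, fun he => hne (hp.eq_penultimate_of_mem_edges he)⟩

lemma Walk.one_lt_degree_of_not_nil [Fintype V] [DecidableRel G.Adj] {u v : V}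
    {p : G.Walk u v} (hp : ¬p.Nil) (hv : G.degree v ≠ 1) : 1 < G.degree v := by
  have := (G.degree_pos_iff_exists_adj v).2 ⟨_, (p.adj_penultimate hp).symm⟩
  omega

/-- Nim with all weights `1` on `G` after the edges of `p` have been played, so that the piece
sits at the end of `p`. -/
def walkPos [DecidableEq V] (G : SimpleGraph V) [DecidableRel G.Adj] {u v : V} (p : G.Walk u v) :
    NimPos V where
  w a b := if G.Adj a b ∧ s(a, b) ∉ p.edges then 1 else 0
  symm a b := by simp only [G.adj_comm a b, Sym2.eq_swap]
  pos := v

variable [DecidableEq V] [DecidableRel G.Adj]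

lemma walkPos_concat_w {u v w : V} (p : G.Walk u v) (h : G.Adj v w) (a b : V) :
    (walkPos G (p.concat h)).w a b = if s(a, b) = s(v, w) then 0 else (walkPos G p).w a b := by
  simp only [walkPos, edges_concat, List.concat_eq_append, List.mem_append, List.mem_singleton]
  split_ifs <;> tauto

lemma nimMove_walkPos_concat {u v w : V} (p : G.Walk u v) (h : G.Adj v w)
    (he : s(v, w) ∉ p.edges) : NimMove (walkPos G p) (walkPos G (p.concat h)) := by
  refine ⟨h.ne, ?_, fun a b hab => ?_⟩
  · simp [walkPos, h, he]
  · rw [walkPos_concat_w, if_neg (by rwa [Sym2.eq_iff])]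

lemma exists_eq_walkPos_concat_of_nimMove {u v : V} {p : G.Walk u v} {q : NimPos V}
    (hq : NimMove (walkPos G p) q) :
    ∃ w, ∃ h : G.Adj v w, s(v, w) ∉ p.edges ∧ q = walkPos G (p.concat h) := by
  obtain ⟨-, hlt, hother⟩ := hq
  simp only [walkPos] at hlt
  split_ifs at hlt with hvq
  · obtain ⟨h, he⟩ := hvq
    refine ⟨q.pos, h, he, NimPos.ext (fun a b => ?_) rfl⟩
    rw [walkPos_concat_w]
    split_ifs with hab
    · rcases Sym2.eq_iff.mp hab with ⟨rfl, rfl⟩ | ⟨rfl, rfl⟩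
      · exact Nat.lt_one_iff.mp hlt
      · rw [q.symm]; exact Nat.lt_one_iff.mp hlt
    · exact hother a b (by rwa [Sym2.eq_iff] at hab)
  · exact absurd hlt (Nat.not_lt_zero _)

theorem moverLoses_walkPos [Fintype V] (hG : G.IsAcyclic)
    {v : V} (hleaf : ∀ (l : V) (p : G.Walk v l), p.IsPath → G.degree l = 1 → Even p.length)
    {u : V} (p : G.Walk v u) (hp : p.IsPath) (heven : Even p.length) :
    MoverLoses (walkPos G p) := by
  refine MoverLoses.of_forall_moverWins fun q hq => ?_
  obtain ⟨x, h, he, rfl⟩ := exists_eq_walkPos_concat_of_nimMove hq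
  have hp' : (p.concat h).IsPath := (hG.isPath_iff_isTrail _).2 (hp.isTrail.concat h he)
  have hodd : Odd (p.concat h).length := by rw [length_concat]; exact heven.add_one
  have hdeg : 1 < G.degree x := one_lt_degree_of_not_nil
    (by rw [← length_eq_zero_iff]; exact hodd.pos.ne')
    (fun h1 => Nat.not_even_iff_odd.mpr hodd (hleaf _ _ hp' h1))
  obtain ⟨w, h', he'⟩ := hp'.exists_adj_notMem_edges hdeg
  have hp'' : ((p.concat h).concat h').IsPath :=
    (hG.isPath_iff_isTrail _).2 (hp'.isTrail.concat h' he')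
  refine ⟨_, nimMove_walkPos_concat _ h' he', moverLoses_walkPos hG hleaf _ hp'' ?_⟩
  rw [length_concat]; exact hodd.add_one
termination_by Fintype.card V - p.length
decreasing_by
  have := hp''.length_lt
  simp only [length_concat] at this ⊢
  omega

end SimpleGraph

/-- Nim with all edge weights 1 on a tree, piece at a vertex `v`
from which every path to a leaf has even length: the player to move loses. -/
theorem stmt18 {V : Type} [Fintype V] (G : SimpleGraph V) [DecidableRel G.Adj]
    (hG : G.IsTree) (v : V)
    (hleaf : ∀ (l : V) (p : G.Walk v l), p.IsPath → G.degree l = 1 →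
      Even p.length) :
    MoverLoses ⟨fun a b => if G.Adj a b then 1 else 0,
      fun a b => if_congr (G.adj_comm a b) rfl rfl, v⟩ := by
  classical
  convert moverLoses_walkPos hG.isAcyclic hleaf nil IsPath.nil (by simp) using 1
  ext a b <;> simp [walkPos]
end
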